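/- arXiv:2404.11325 — 6 statements merged into one kernel-verified Lean document; each statement's English description precedes it below -/
import Mathlib

section
/- Fix n, k ∈ ℕ with k ≥ 1 and δ ∈ (0, 1/2^{k+3}), and let p be a probability distribution on 𝔽₂^k that is a δ-Santha-Vazirani source. Then there exist a finite probability space with distribution ρ and a function G from ((𝔽₂ⁿ × 𝔽₂)^k × Ω) to (𝔽₂ⁿ × 𝔽₂)^k, both depending only on n, k, p, δ (and not on the secret), such that for every sk ∈ 𝔽₂ⁿ, the pushforward under G of the product of k independent samples from the LPN distribution LPN_{n, 2^{k+2}δ}(sk) together with an independent sample from ρ is exactly the batch LPN distribution LPN_{n,p}(sk). -/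
/-- A probability mass function on a finite type: nonnegative, summing to 1. -/
def IsProbDist {X : Type*} [Fintype X] (p : X → ℝ) : Prop :=
  (∀ x, 0 ≤ p x) ∧ ∑ x, p x = 1

/-- Bernoulli distribution on `𝔽₂`, taking value `1` with probability `α`. -/
noncomputable def bern (α : ℝ) : ZMod 2 → ℝ := fun z => if z = 1 then α else 1 - α

/-- Pushforward of a mass function on a finite type along a map. -/
noncomputable def pushforward {X Y : Type*} [Fintype X] [DecidableEq Y]
    (f : X → Y) (p : X → ℝ) : Y → ℝ :=
  fun y => ∑ x ∈ Finset.univ.filter (fun x => f x = y), p x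

/-- The LPN distribution `LPN_{n,δ}(sk)`: the law of `(u, ⟨u,sk⟩ + e)` with `u`
uniform on `𝔽₂ⁿ` and `e ∼ Ber(1/2 − δ)` independent. -/
noncomputable def lpn (n : ℕ) (δ : ℝ) (sk : Fin n → ZMod 2) :
    ((Fin n → ZMod 2) × ZMod 2) → ℝ :=
  fun s => (1 / 2 ^ n) * bern (1 / 2 - δ) (s.2 - dotProduct s.1 sk)

/-- The batch LPN distribution `LPN_{n,p}(sk)`: the law of `(uⁱ, ⟨uⁱ,sk⟩ + eⁱ)_{i=1}^k`
with the `uⁱ` i.i.d. uniform on `𝔽₂ⁿ` and `(e¹,…,e^k) ∼ p` independent of them. -/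
noncomputable def batchLPN (n k : ℕ) (p : (Fin k → ZMod 2) → ℝ) (sk : Fin n → ZMod 2) :
    (Fin k → (Fin n → ZMod 2) × ZMod 2) → ℝ :=
  fun s => (1 / 2 ^ (n * k)) * p (fun i => (s i).2 - dotProduct (s i).1 sk)

/-- `p` is a `δ`-Santha–Vazirani source: for every `i` and every conditioning of the
preceding bits, the conditional probability that the `i`-th bit is `1` lies in
`[1/2 − δ, 1/2 + δ]` (stated multiplicatively to avoid division by zero). -/
def IsSVSource {k : ℕ} (δ : ℝ) (p : (Fin k → ZMod 2) → ℝ) : Prop :=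
  ∀ (i : Fin k) (x : Fin k → ZMod 2),
    (1 / 2 - δ) * (∑ z ∈ Finset.univ.filter (fun z : Fin k → ZMod 2 => ∀ j, j < i → z j = x j), p z)
      ≤ (∑ z ∈ Finset.univ.filter
          (fun z : Fin k → ZMod 2 => z i = 1 ∧ ∀ j, j < i → z j = x j), p z) ∧
    (∑ z ∈ Finset.univ.filter
          (fun z : Fin k → ZMod 2 => z i = 1 ∧ ∀ j, j < i → z j = x j), p z)
      ≤ (1 / 2 + δ) *
        (∑ z ∈ Finset.univ.filter (fun z : Fin k → ZMod 2 => ∀ j, j < i → z j = x j), p z)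

/-! Expand `p` in the Walsh basis, `p = 2^{-k} ∑_S p̂(S) χ_S`. The Santha–Vazirani condition
gives `|p̂(S)| ≤ 2δ` for `S ≠ 0`: conditioning on the bits before the last index `i` of `S`,
each fiber contributes `±` the conditional bias of bit `i`, which is at most `2δ`.

For `S ≠ 0` pick an invertible `A` over `𝔽₂` with `Sᵀ A = eᵢ`. If `e` is i.i.d.
`Ber(1/2 − Δ)` and `c` is drawn from the signed density `2^{-k}(α + β χ_S(c))`, then `A e + c`
has law `2^{-k}(α + 2Δβ χ_S)`, because `χ_S(A e) = (-1)^{eᵢ}` has mean `2Δ`. Applied to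
samples, `(U, b) ↦ (A U, A b + c)` keeps the `uⁱ` uniform and turns noise `e` into `A e + c`.
Mixing over all `S ≠ 0` with `α = 1/(2^k − 1)` and `β = p̂(S)/(2Δ)` produces exactly `p`, by
Fourier inversion, and `Δ = 2^{k+2}δ` makes `|β| ≤ α`, so every shift density is nonnegative. -/

open Finset Matrix

theorem AddChar.map_sum_eq_prod {A M ι : Type*} [AddCommMonoid A] [CommMonoid M]
    (ψ : AddChar A M) (s : Finset ι) (f : ι → A) : ψ (∑ i ∈ s, f i) = ∏ i ∈ s, ψ (f i) := by
  classical
  induction s using Finset.induction_on with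
  | empty => simp
  | insert a s ha ih => rw [sum_insert ha, prod_insert ha, AddChar.map_add_eq_mul, ih]

namespace LPN

lemma zmod_two_eq_zero_or_one (z : ZMod 2) : z = 0 ∨ z = 1 := by
  revert z; decide

lemma zmod_two_eq_one_of_ne_zero {z : ZMod 2} (h : z ≠ 0) : z = 1 :=
  (zmod_two_eq_zero_or_one z).resolve_left h

lemma pi_zmod_two_neg {ι : Type*} (f : ι → ZMod 2) : -f = f :=
  funext fun i => ZMod.neg_eq_self_mod_two (f i)

lemma exists_eq_one_of_ne_zero {ι : Type*} {S : ι → ZMod 2} (hS : S ≠ 0) : ∃ i, S i = 1 := by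
  obtain ⟨i, hi⟩ := Function.ne_iff.mp hS
  exact ⟨i, zmod_two_eq_one_of_ne_zero hi⟩

noncomputable def pivotOf {ι : Type*} (S : {S : ι → ZMod 2 // S ≠ 0}) : ι :=
  (exists_eq_one_of_ne_zero S.2).choose

lemma apply_pivotOf {ι : Type*} (S : {S : ι → ZMod 2 // S ≠ 0}) : S.1 (pivotOf S) = 1 :=
  (exists_eq_one_of_ne_zero S.2).choose_spec

noncomputable def sgnChar : AddChar (ZMod 2) ℝ where
  toFun z := if z = 0 then 1 else -1
  map_zero_eq_one' := if_pos rfl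
  map_add_eq_mul' a b := by
    rcases zmod_two_eq_zero_or_one a with rfl | rfl <;>
      rcases zmod_two_eq_zero_or_one b with rfl | rfl <;>
      simp only [show (1 : ZMod 2) + 1 = 0 from rfl, add_zero, zero_add] <;> norm_num

lemma sgnChar_apply (z : ZMod 2) : sgnChar z = if z = 0 then 1 else -1 := rfl

lemma sgnChar_one : sgnChar 1 = -1 := by simp [sgnChar_apply]

lemma abs_sgnChar (z : ZMod 2) : |sgnChar z| = 1 := by
  rcases zmod_two_eq_zero_or_one z with rfl | rfl <;> simp [sgnChar_apply]

lemma sum_bern_mul_sgnChar (α : ℝ) (t : ZMod 2) :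
    ∑ z, bern α z * sgnChar (t * z) = if t = 0 then 1 else 1 - 2 * α := by
  rw [show (univ : Finset (ZMod 2)) = {0, 1} from rfl, sum_pair zero_ne_one]
  rcases zmod_two_eq_zero_or_one t with rfl | rfl
  · simp [bern]
  · simp only [bern, sgnChar_apply, one_mul, one_ne_zero, zero_ne_one, ↓reduceIte, mul_neg,
      mul_one]
    ring

section Walsh

variable {ι : Type*} [Fintype ι]

noncomputable def walsh (S : ι → ZMod 2) : AddChar (ι → ZMod 2) ℝ where
  toFun x := sgnChar (S ⬝ᵥ x)
  map_zero_eq_one' := by simp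
  map_add_eq_mul' x y := by simp [dotProduct_add, AddChar.map_add_eq_mul]

lemma walsh_apply (S x : ι → ZMod 2) : walsh S x = sgnChar (S ⬝ᵥ x) := rfl

lemma walsh_comm (S x : ι → ZMod 2) : walsh S x = walsh x S := by
  rw [walsh_apply, walsh_apply, dotProduct_comm]

lemma abs_walsh (S x : ι → ZMod 2) : |walsh S x| = 1 := abs_sgnChar _

lemma walsh_zero_left (x : ι → ZMod 2) : walsh 0 x = 1 := by
  simp [walsh_apply]

lemma walsh_mulVec (S : ι → ZMod 2) (M : Matrix ι ι (ZMod 2)) (e : ι → ZMod 2) :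
    walsh S (M *ᵥ e) = walsh (S ᵥ* M) e := by
  rw [walsh_apply, walsh_apply, dotProduct_mulVec]

lemma one_lt_two_pow_card [Nonempty ι] : (1 : ℝ) < 2 ^ Fintype.card ι :=
  one_lt_pow₀ one_lt_two Fintype.card_ne_zero

variable [DecidableEq ι]

lemma walsh_ne_zero {S : ι → ZMod 2} (hS : S ≠ 0) : walsh S ≠ 0 := by
  obtain ⟨j, hj⟩ := exists_eq_one_of_ne_zero hS
  intro h
  have := DFunLike.congr_fun h (Pi.single j 1)
  rw [walsh_apply, dotProduct_single, mul_one, hj, sgnChar_one, AddChar.zero_apply] at this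
  norm_num at this

lemma sum_walsh (S : ι → ZMod 2) :
    ∑ x, walsh S x = if S = 0 then (2 : ℝ) ^ Fintype.card ι else 0 := by
  split_ifs with hS
  · simp [hS, walsh_zero_left, ZMod.card]
  · rw [AddChar.sum_eq_ite, if_neg (walsh_ne_zero hS)]

lemma card_subtype_ne_zero :
    (Fintype.card {S : ι → ZMod 2 // S ≠ 0} : ℝ) = 2 ^ Fintype.card ι - 1 := by
  simp [Nat.cast_sub Nat.one_le_two_pow, ZMod.card]

noncomputable def walshCoeff (p : (ι → ZMod 2) → ℝ) (S : ι → ZMod 2) : ℝ :=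
  ∑ x, p x * walsh S x

lemma walshCoeff_zero (p : (ι → ZMod 2) → ℝ) : walshCoeff p 0 = ∑ x, p x := by
  simp [walshCoeff, walsh_zero_left]

theorem sum_walshCoeff_mul_walsh (p : (ι → ZMod 2) → ℝ) (f : ι → ZMod 2) :
    ∑ S, walshCoeff p S * walsh S f = 2 ^ Fintype.card ι * p f := by
  have horth (x : ι → ZMod 2) :
      ∑ S, walsh S x * walsh S f = if x = f then 2 ^ Fintype.card ι else 0 := by
    simp_rw [← AddChar.map_add_eq_mul, walsh_comm _ (x + f), sum_walsh,
      add_eq_zero_iff_eq_neg, pi_zmod_two_neg]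
  simp_rw [walshCoeff, sum_mul, mul_assoc]
  rw [sum_comm]
  simp_rw [← mul_sum, horth]
  simp [mul_comm]

lemma sum_ne_zero_walshCoeff_mul_walsh (p : (ι → ZMod 2) → ℝ) (f : ι → ZMod 2) :
    ∑ S : {S : ι → ZMod 2 // S ≠ 0}, walshCoeff p S * walsh S f
      = 2 ^ Fintype.card ι * p f - ∑ x, p x := by
  rw [← sum_subtype (univ.erase 0) (p := (· ≠ 0)) (by simp) (fun S => walshCoeff p S * walsh S f),
    sum_erase_eq_sub (mem_univ _), sum_walshCoeff_mul_walsh, walshCoeff_zero, walsh_zero_left,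
    mul_one]

noncomputable def bernProd (α : ℝ) (e : ι → ZMod 2) : ℝ := ∏ j, bern α (e j)

theorem sum_bernProd_mul_walsh (α : ℝ) (T : ι → ZMod 2) :
    ∑ e, bernProd α e * walsh T e = ∏ j, if T j = 0 then 1 else 1 - 2 * α := by
  simp_rw [← sum_bern_mul_sgnChar, Fintype.prod_sum, bernProd, walsh_apply, dotProduct,
    AddChar.map_sum_eq_prod, ← prod_mul_distrib]

lemma sum_bernProd (α : ℝ) : ∑ e : ι → ZMod 2, bernProd α e = 1 := by
  simpa [walsh_zero_left] using sum_bernProd_mul_walsh α (0 : ι → ZMod 2)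

lemma sum_bernProd_mul_walsh_single (α : ℝ) (i : ι) :
    ∑ e, bernProd α e * walsh (Pi.single i 1) e = 1 - 2 * α := by
  rw [sum_bernProd_mul_walsh, prod_eq_single i (fun j _ hj => by simp [hj]) (by simp)]
  simp

/-- The identity matrix with its `i`-th row replaced by `S`. -/
def pivotMatrix (S : ι → ZMod 2) (i : ι) : Matrix ι ι (ZMod 2) :=
  1 + vecMulVec (Pi.single i 1) (S - Pi.single i 1)

lemma vecMul_pivotMatrix {S : ι → ZMod 2} {i : ι} (hS : S i = 1) :
    S ᵥ* pivotMatrix S i = Pi.single i 1 := by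
  have : Nonempty ι := ⟨i⟩
  rw [pivotMatrix, vecMul_add, vecMul_one, vecMul_vecMulVec, dotProduct_single_one, hS, one_smul,
    ← add_sub_assoc, CharTwo.add_self_eq_zero, zero_sub, CharTwo.neg_eq]

lemma pivotMatrix_mul_self {S : ι → ZMod 2} {i : ι} (hS : S i = 1) :
    pivotMatrix S i * pivotMatrix S i = 1 := by
  have : Nonempty ι := ⟨i⟩
  rw [pivotMatrix, add_mul, mul_add, mul_add, vecMulVec_mul_vecMulVec, dotProduct_single_one]
  simp [hS, add_assoc, CharTwo.add_self_eq_zero]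

def pivotUnit {S : ι → ZMod 2} {i : ι} (hS : S i = 1) : GL ι (ZMod 2) :=
  ⟨pivotMatrix S i, pivotMatrix S i, pivotMatrix_mul_self hS, pivotMatrix_mul_self hS⟩

lemma sum_eq_sum_sub_mulVec (A : GL ι (ZMod 2)) (f : ι → ZMod 2) (g : (ι → ZMod 2) → ℝ) :
    ∑ c, g c = ∑ e, g (f - A.val *ᵥ e) := by
  refine (Function.Bijective.sum_comp ?_ g).symm
  exact Function.bijective_iff_has_inverse.mpr
    ⟨fun c => A⁻¹.val *ᵥ (f - c), fun e => by simp [mulVec_mulVec],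
      fun c => by simp [mulVec_mulVec]⟩

theorem sum_walsh_mul_comp_inv_mulVec (A : GL ι (ZMod 2)) (S f : ι → ZMod 2) (α β : ℝ)
    (q : (ι → ZMod 2) → ℝ) :
    ∑ c, (α + β * walsh S c) * q (A⁻¹.val *ᵥ (f - c))
      = α * ∑ e, q e + β * walsh S f * ∑ e, q e * walsh (S ᵥ* A.val) e := by
  have hwalsh (e : ι → ZMod 2) : walsh S (f - A.val *ᵥ e) = walsh S f * walsh (S ᵥ* A.val) e := by
    rw [sub_eq_add_neg, pi_zmod_two_neg, AddChar.map_add_eq_mul, walsh_mulVec]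
  rw [sum_eq_sum_sub_mulVec A f]
  simp only [sub_sub_cancel, mulVec_mulVec, Units.inv_mul, one_mulVec, hwalsh, add_mul,
    sum_add_distrib, mul_sum]
  exact congrArg _ (sum_congr rfl fun e _ => by ring)

lemma sum_mul_bernProd_pivotUnit {S : ι → ZMod 2} {i : ι} (hS : S i = 1) (α β Δ : ℝ)
    (f : ι → ZMod 2) :
    ∑ c, (α + β * walsh S c) * bernProd (1 / 2 - Δ) ((pivotUnit hS)⁻¹.val *ᵥ (f - c))
      = α + 2 * Δ * β * walsh S f := by
  rw [sum_walsh_mul_comp_inv_mulVec, sum_bernProd, pivotUnit, vecMul_pivotMatrix hS,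
    sum_bernProd_mul_walsh_single]
  ring

noncomputable def mixWeight (p : (ι → ZMod 2) → ℝ) (Δ : ℝ)
    (w : {S : ι → ZMod 2 // S ≠ 0} × (ι → ZMod 2)) : ℝ :=
  (1 / (2 ^ Fintype.card ι - 1) + walshCoeff p w.1 / (2 * Δ) * walsh w.1 w.2) / 2 ^ Fintype.card ι

variable [Nonempty ι]

lemma mixWeight_nonneg {Δ : ℝ} (hΔ : 0 < Δ) {p : (ι → ZMod 2) → ℝ}
    (hcoeff : ∀ S ≠ 0, (2 ^ Fintype.card ι - 1) * |walshCoeff p S| ≤ 2 * Δ)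
    (w : {S : ι → ZMod 2 // S ≠ 0} × (ι → ZMod 2)) : 0 ≤ mixWeight p Δ w := by
  have hN := one_lt_two_pow_card (ι := ι)
  have hbias : |walshCoeff p w.1 / (2 * Δ) * walsh w.1 w.2| ≤ 1 / (2 ^ Fintype.card ι - 1) := by
    rw [abs_mul, abs_walsh, mul_one, abs_div, abs_of_pos (by positivity : 0 < 2 * Δ),
      div_le_div_iff₀ (by positivity) (by linarith)]
    linarith [hcoeff w.1 w.1.2]
  refine div_nonneg ?_ (by positivity)
  linarith [neg_abs_le (walshCoeff p w.1 / (2 * Δ) * walsh w.1 w.2)]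

lemma sum_mixWeight (p : (ι → ZMod 2) → ℝ) (Δ : ℝ) : ∑ w, mixWeight p Δ w = 1 := by
  have hN := one_lt_two_pow_card (ι := ι)
  have hinner (S : {S : ι → ZMod 2 // S ≠ 0}) :
      ∑ c, mixWeight p Δ (S, c) = 1 / (2 ^ Fintype.card ι - 1) := by
    simp only [mixWeight, ← sum_div, sum_add_distrib, ← mul_sum, sum_walsh, if_neg S.2, mul_zero,
      add_zero, sum_const, card_univ, Fintype.card_fun, ZMod.card, nsmul_eq_mul]
    push_cast
    field_simp
  rw [Fintype.sum_prod_type, sum_congr rfl fun S _ => hinner S, sum_const, card_univ, nsmul_eq_mul,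
    card_subtype_ne_zero]
  field_simp [(by linarith : (2 : ℝ) ^ Fintype.card ι - 1 ≠ 0)]

theorem sum_mixWeight_mul_bernProd {Δ : ℝ} (hΔ : Δ ≠ 0) {p : (ι → ZMod 2) → ℝ}
    (hp : ∑ x, p x = 1) (f : ι → ZMod 2) :
    ∑ w, mixWeight p Δ w * bernProd (1 / 2 - Δ) ((pivotUnit (apply_pivotOf w.1))⁻¹.val *ᵥ (f - w.2))
      = p f := by
  set N : ℝ := 2 ^ Fintype.card ι with hN_def
  have hN : 1 < N := one_lt_two_pow_card
  have hinner (S : {S : ι → ZMod 2 // S ≠ 0}) :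
      ∑ c, mixWeight p Δ (S, c)
          * bernProd (1 / 2 - Δ) ((pivotUnit (apply_pivotOf S))⁻¹.val *ᵥ (f - c))
        = (1 / (N - 1) + walshCoeff p S * walsh S f) / N := by
    have hweight (c : ι → ZMod 2) : mixWeight p Δ (S, c)
        = 1 / (N - 1) / N + walshCoeff p S / (2 * Δ) / N * walsh S c := by
      simp only [mixWeight, ← hN_def]
      ring
    simp_rw [hweight, sum_mul_bernProd_pivotUnit]
    field_simp
  rw [Fintype.sum_prod_type, sum_congr rfl fun S _ => hinner S, ← sum_div, sum_add_distrib,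
    sum_ne_zero_walshCoeff_mul_walsh, hp, sum_const, card_univ, nsmul_eq_mul, card_subtype_ne_zero,
    ← hN_def]
  field_simp [(by linarith : N - 1 ≠ 0)]
  ring

theorem exists_bernProd_mixture_eq {Δ : ℝ} (hΔ : 0 < Δ) {p : (ι → ZMod 2) → ℝ}
    (hp : ∑ x, p x = 1)
    (hcoeff : ∀ S ≠ 0, (2 ^ Fintype.card ι - 1) * |walshCoeff p S| ≤ 2 * Δ) :
    ∃ (m : ℕ) (ρ : Fin m → ℝ) (A : Fin m → GL ι (ZMod 2)) (c : Fin m → ι → ZMod 2),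
      IsProbDist ρ ∧
        ∀ f, ∑ j, ρ j * bernProd (1 / 2 - Δ) ((A j)⁻¹.val *ᵥ (f - c j)) = p f := by
  let e := Fintype.equivFin ({S : ι → ZMod 2 // S ≠ 0} × (ι → ZMod 2))
  exact ⟨_, fun j => mixWeight p Δ (e.symm j), fun j => pivotUnit (apply_pivotOf (e.symm j).1),
    fun j => (e.symm j).2,
    ⟨fun _ => mixWeight_nonneg hΔ hcoeff _, (e.symm.sum_comp _).trans (sum_mixWeight p Δ)⟩,
    fun f => (e.symm.sum_comp _).trans (sum_mixWeight_mul_bernProd hΔ.ne' hp f)⟩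

end Walsh

theorem abs_sum_le_of_forall_fiber {X Y : Type*} [Fintype X] [DecidableEq Y] (π : X → Y)
    (g p : X → ℝ) (c : ℝ)
    (h : ∀ x, |∑ z with π z = π x, g z| ≤ c * ∑ z with π z = π x, p z) :
    |∑ x, g x| ≤ c * ∑ x, p x := by
  have hmaps : ∀ x ∈ (univ : Finset X), π x ∈ univ.image π :=
    fun x _ => mem_image_of_mem π (mem_univ x)
  rw [← sum_fiberwise_of_maps_to hmaps g, ← sum_fiberwise_of_maps_to hmaps p, mul_sum]
  refine (abs_sum_le_sum_abs _ _).trans (sum_le_sum fun y hy => ?_)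
  obtain ⟨x, -, rfl⟩ := mem_image.mp hy
  simpa using h x

section SanthaVazirani

variable {k : ℕ}

def truncate (i : Fin k) (x : Fin k → ZMod 2) : Fin k → ZMod 2 :=
  fun j => if j < i then x j else 0

lemma truncate_eq_truncate_iff {i : Fin k} {x z : Fin k → ZMod 2} :
    truncate i z = truncate i x ↔ ∀ j < i, z j = x j := by
  refine ⟨fun h j hj => by simpa [truncate, hj] using congrFun h j, fun h => funext fun j => ?_⟩
  by_cases hj : j < i <;> simp [truncate, hj, h]

lemma truncate_dotProduct (i : Fin k) (S x : Fin k → ZMod 2) :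
    truncate i S ⬝ᵥ x = truncate i S ⬝ᵥ truncate i x := by
  refine sum_congr rfl fun j _ => ?_
  by_cases hj : j < i <;> simp [truncate, hj]

lemma exists_eq_truncate_add_single {S : Fin k → ZMod 2} (hS : S ≠ 0) :
    ∃ i, S = truncate i S + Pi.single i 1 := by
  have hne : (univ.filter (S · ≠ 0)).Nonempty := by
    obtain ⟨j, hj⟩ := Function.ne_iff.mp hS
    exact ⟨j, by simpa using hj⟩
  set i := (univ.filter (S · ≠ 0)).max' hne
  refine ⟨i, funext fun j => ?_⟩
  have hi : S i = 1 := zmod_two_eq_one_of_ne_zero (by simpa using max'_mem _ hne)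
  rcases lt_trichotomy j i with hj | rfl | hj
  · simp [truncate, hj, hj.ne]
  · simp [truncate, hi]
  · have : S j = 0 := by
      by_contra h
      exact absurd (le_max' _ j (by simpa using h)) (not_le.mpr hj)
    simp [truncate, hj.ne', not_lt.mpr hj.le, this]

lemma IsSVSource.abs_sum_mul_sgnChar_le {δ : ℝ} {p : (Fin k → ZMod 2) → ℝ}
    (hSV : IsSVSource δ p) (i : Fin k) (x : Fin k → ZMod 2) :
    |∑ z with ∀ j < i, z j = x j, p z * sgnChar (z i)|
      ≤ 2 * δ * ∑ z with ∀ j < i, z j = x j, p z := by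
  have hsplit : ∑ z with ∀ j < i, z j = x j, p z * sgnChar (z i)
      = ∑ z with ∀ j < i, z j = x j, p z
        - 2 * ∑ z with z i = 1 ∧ ∀ j < i, z j = x j, p z := by
    have hpt (z : Fin k → ZMod 2) :
        p z * sgnChar (z i) = p z - 2 * if z i = 1 then p z else 0 := by
      rcases zmod_two_eq_zero_or_one (z i) with h | h
      · simp [h]
      · simp only [h, sgnChar_one, mul_neg, mul_one, ↓reduceIte]
        ring
    simp_rw [hpt, sum_sub_distrib, ← mul_sum, ← sum_filter, filter_filter, and_comm]
  obtain ⟨hlow, hhigh⟩ := hSV i x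
  rw [hsplit, abs_le]
  constructor <;> linarith

theorem IsSVSource.abs_walshCoeff_le {δ : ℝ} {p : (Fin k → ZMod 2) → ℝ} (hSV : IsSVSource δ p)
    {S : Fin k → ZMod 2} (hS : S ≠ 0) : |walshCoeff p S| ≤ 2 * δ * ∑ x, p x := by
  obtain ⟨i, hi⟩ := exists_eq_truncate_add_single hS
  have hwalsh (x : Fin k → ZMod 2) :
      walsh S x = walsh (truncate i S) (truncate i x) * sgnChar (x i) := by
    conv_lhs => rw [hi]
    rw [walsh_apply, add_dotProduct, single_one_dotProduct, AddChar.map_add_eq_mul,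
      truncate_dotProduct, walsh_apply]
  refine abs_sum_le_of_forall_fiber (truncate i) _ _ _ fun x => ?_
  have hfiber : ∑ z with truncate i z = truncate i x, p z * walsh S z
      = walsh (truncate i S) (truncate i x)
        * ∑ z with truncate i z = truncate i x, p z * sgnChar (z i) := by
    rw [mul_sum]
    refine sum_congr rfl fun z hz => ?_
    rw [hwalsh, (mem_filter.mp hz).2]
    ring
  rw [hfiber, abs_mul, abs_walsh, one_mul]
  simp_rw [truncate_eq_truncate_iff]
  exact IsSVSource.abs_sum_mul_sgnChar_le hSV i x

end SanthaVazirani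

lemma pushforward_prod_apply {X W Y : Type*} [Fintype X] [Fintype W] [DecidableEq Y]
    (G : X × W → Y) (μ : X → ℝ) (ρ : W → ℝ) (y : Y) :
    pushforward G (fun x => μ x.1 * ρ x.2) y
      = ∑ w, ρ w * pushforward (fun x => G (x, w)) μ y := by
  simp only [pushforward, sum_filter, Fintype.sum_prod_type, mul_sum]
  rw [sum_comm]
  exact sum_congr rfl fun w _ => sum_congr rfl fun x _ => by split_ifs <;> ring

lemma pushforward_equiv {X Y : Type*} [Fintype X] [DecidableEq Y] (e : X ≃ Y) (μ : X → ℝ) :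
    pushforward e μ = fun y => μ (e.symm y) := by
  funext y
  rw [pushforward, show univ.filter (fun x => e x = y) = {e.symm y} by
    ext; simp [Equiv.eq_symm_apply], sum_singleton]

section Batch

variable {n k : ℕ}

/-- The affine map `(U, b) ↦ (A U, A b + c)` on a batch of samples, `U` having rows `uⁱ`. -/
def batchAffine (A : GL (Fin k) (ZMod 2)) (c : Fin k → ZMod 2)
    (s : Fin k → (Fin n → ZMod 2) × ZMod 2) : Fin k → (Fin n → ZMod 2) × ZMod 2 :=
  fun j => ((A.val * of fun i => (s i).1) j, (A.val *ᵥ (fun i => (s i).2) + c) j)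

lemma batchAffine_batchAffine (A B : GL (Fin k) (ZMod 2)) (c d : Fin k → ZMod 2)
    (s : Fin k → (Fin n → ZMod 2) × ZMod 2) :
    batchAffine A c (batchAffine B d s) = batchAffine (A * B) (A.val *ᵥ d + c) s := by
  funext j
  simp only [batchAffine, Units.val_mul, Matrix.mul_assoc, ← mulVec_mulVec, mulVec_add, add_assoc]
  rfl

lemma batchAffine_one_zero (s : Fin k → (Fin n → ZMod 2) × ZMod 2) : batchAffine 1 0 s = s := by
  funext j
  simp only [batchAffine, Units.val_one, Matrix.one_mul, one_mulVec, Pi.add_apply, Pi.zero_apply,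
    add_zero]
  rfl

def batchAffineEquiv (A : GL (Fin k) (ZMod 2)) (c : Fin k → ZMod 2) :
    (Fin k → (Fin n → ZMod 2) × ZMod 2) ≃ (Fin k → (Fin n → ZMod 2) × ZMod 2) where
  toFun := batchAffine A c
  invFun := batchAffine A⁻¹ (-(A⁻¹.val *ᵥ c))
  left_inv s := by
    rw [batchAffine_batchAffine, inv_mul_cancel, add_neg_cancel, batchAffine_one_zero]
  right_inv s := by
    rw [batchAffine_batchAffine, mul_inv_cancel, mulVec_neg, mulVec_mulVec, Units.mul_inv,
      one_mulVec, neg_add_cancel, batchAffine_one_zero]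

lemma batchLPN_batchAffine (A : GL (Fin k) (ZMod 2)) (c : Fin k → ZMod 2)
    (q : (Fin k → ZMod 2) → ℝ) (sk : Fin n → ZMod 2) (s : Fin k → (Fin n → ZMod 2) × ZMod 2) :
    batchLPN n k q sk (batchAffine A c s) = batchLPN n k (fun e => q (A.val *ᵥ e + c)) sk s := by
  have hnoise : (A.val *ᵥ (fun i => (s i).2) + c) - (A.val * of fun i => (s i).1) *ᵥ sk
      = A.val *ᵥ ((fun i => (s i).2) - (of fun i => (s i).1) *ᵥ sk) + c := by
    rw [← mulVec_mulVec, mulVec_sub]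
    abel
  exact congrArg (fun e => 1 / 2 ^ (n * k) * q e) hnoise

theorem pushforward_batchAffine_mixture {W : Type*} [Fintype W] (A : W → GL (Fin k) (ZMod 2))
    (c : W → Fin k → ZMod 2) (q : (Fin k → ZMod 2) → ℝ) (ρ : W → ℝ) (sk : Fin n → ZMod 2) :
    pushforward (fun x : (Fin k → (Fin n → ZMod 2) × ZMod 2) × W => batchAffine (A x.2) (c x.2) x.1)
        (fun x => batchLPN n k q sk x.1 * ρ x.2)
      = batchLPN n k (fun f => ∑ w, ρ w * q ((A w)⁻¹.val *ᵥ (f - c w))) sk := by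
  have hw (w : W) (t : Fin k → (Fin n → ZMod 2) × ZMod 2) :
      pushforward (batchAffine (A w) (c w)) (batchLPN n k q sk) t
        = batchLPN n k (fun f => q ((A w)⁻¹.val *ᵥ (f - c w))) sk t := by
    rw [show batchAffine (A w) (c w) = batchAffineEquiv (A w) (c w) from rfl, pushforward_equiv]
    simp only [batchAffineEquiv, Equiv.coe_fn_symm_mk, batchLPN_batchAffine, mulVec_add,
      sub_eq_add_neg, mulVec_neg]
  funext t
  rw [pushforward_prod_apply]
  simp only [hw, batchLPN, mul_sum]
  exact sum_congr rfl fun w _ => by ring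

lemma prod_lpn_eq_batchLPN (δ : ℝ) (sk : Fin n → ZMod 2) (s : Fin k → (Fin n → ZMod 2) × ZMod 2) :
    ∏ i, lpn n δ sk (s i) = batchLPN n k (bernProd (1 / 2 - δ)) sk s := by
  simp only [lpn, batchLPN, bernProd, prod_mul_distrib, prod_const, card_univ, Fintype.card_fin,
    div_pow, one_pow, pow_mul]

end Batch

end LPN

open LPN in
theorem lpn_robust_to_sv_batch_noise_general (n k : ℕ) (hk : 1 ≤ k) (δ : ℝ)
    (hδ0 : 0 < δ)
    (p : (Fin k → ZMod 2) → ℝ) (hp : IsProbDist p) (hSV : IsSVSource δ p) :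
    ∃ (m : ℕ) (ρ : Fin m → ℝ)
      (G : (Fin k → (Fin n → ZMod 2) × ZMod 2) × Fin m → (Fin k → (Fin n → ZMod 2) × ZMod 2)),
      IsProbDist ρ ∧
      ∀ sk : Fin n → ZMod 2,
        pushforward G (fun x => (∏ i, lpn n (2 ^ (k + 2) * δ) sk (x.1 i)) * ρ x.2)
          = batchLPN n k p sk := by
  have : Nonempty (Fin k) := Fin.pos_iff_nonempty.mp hk
  have hcoeff (S : Fin k → ZMod 2) (hS : S ≠ 0) :
      (2 ^ Fintype.card (Fin k) - 1) * |walshCoeff p S| ≤ 2 * (2 ^ (k + 2) * δ) := by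
    have hbound := IsSVSource.abs_walshCoeff_le hSV hS
    rw [hp.2, mul_one] at hbound
    have h2k : (1 : ℝ) ≤ 2 ^ k := one_le_pow₀ one_le_two
    rw [Fintype.card_fin, pow_add]
    nlinarith [abs_nonneg (walshCoeff p S)]
  obtain ⟨m, ρ, A, c, hρ, hmix⟩ := exists_bernProd_mixture_eq (by positivity) hp.2 hcoeff
  refine ⟨m, ρ, fun x => batchAffine (A x.2) (c x.2) x.1, hρ, fun sk => ?_⟩
  simp_rw [prod_lpn_eq_batchLPN, pushforward_batchAffine_mixture, hmix]

/-- **Robustness of LPN to Santha–Vazirani batch noise.** There is a finite probability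
space `Fin m` with distribution `ρ` and a map `G`, both depending only on `n, k, p, δ`
(and not on the secret), such that for every secret `sk`, the pushforward under `G` of
(k independent samples from `LPN_{n, 2^{k+2}δ}(sk)`) × (an independent sample from `ρ`)
is exactly the batch LPN distribution `LPN_{n,p}(sk)`. -/
theorem lpn_robust_to_sv_batch_noise (n k : ℕ) (hk : 1 ≤ k) (δ : ℝ)
    (hδ0 : 0 < δ) (hδ1 : δ < 1 / 2 ^ (k + 3))
    (p : (Fin k → ZMod 2) → ℝ) (hp : IsProbDist p) (hSV : IsSVSource δ p) :
    ∃ (m : ℕ) (ρ : Fin m → ℝ)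
      (G : (Fin k → (Fin n → ZMod 2) × ZMod 2) × Fin m → (Fin k → (Fin n → ZMod 2) × ZMod 2)),
      IsProbDist ρ ∧
      ∀ sk : Fin n → ZMod 2,
        pushforward G (fun x => (∏ i, lpn n (2 ^ (k + 2) * δ) sk (x.1 i)) * ρ x.2)
          = batchLPN n k p sk :=
  lpn_robust_to_sv_batch_noise_general n k hk δ hδ0 p hp hSV
end

section
/- Fix k ∈ ℕ with k ≥ 2, and let B be the real (2^k − 1) × (2^k − 1) matrix with rows and columns indexed by the nonzero vectors of {0,1}^k, where B_{uv} = ⟨u,v⟩ mod 2 (viewed as a real number). Then BᵀB = 2^{k−2}·𝟙𝟙ᵀ + 2^{k−2}·I, where 𝟙 is the all-ones vector and I the identity matrix of dimension 2^k − 1. -/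
open Matrix

def Bmat (k : ℕ) : Matrix {v : Fin k → ZMod 2 // v ≠ 0} {v : Fin k → ZMod 2 // v ≠ 0} ℝ :=
  Matrix.of fun u v => if dotProduct u.1 v.1 = 1 then 1 else 0

/-!
The entry `(BᵀB)_{uv}` counts the `w ∈ 𝔽₂^k` with `⟨w,u⟩ = ⟨w,v⟩ = 1` (the term `w = 0`
contributes nothing, so the sum may run over all of `𝔽₂^k`). Writing the indicator of `x = 1`
as `(1 - (-1)^x) / 2` turns this count into a sum of characters `w ↦ (-1)^⟨w,a⟩`, which sum to
`0` unless `a = 0`. Only `a = u + v` can vanish, and it does exactly when `u = v`.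
-/

noncomputable def parityChar (x : ZMod 2) : ℝ := if x = 1 then -1 else 1

lemma zmod_two_eq_zero_or_eq_one : ∀ x : ZMod 2, x = 0 ∨ x = 1 := by decide

lemma parityChar_add (x y : ZMod 2) : parityChar (x + y) = parityChar x * parityChar y := by
  obtain rfl | rfl := zmod_two_eq_zero_or_eq_one x <;>
    obtain rfl | rfl := zmod_two_eq_zero_or_eq_one y <;>
    simp [parityChar, CharTwo.add_self_eq_zero]

lemma ite_eq_one_eq_one_sub_parityChar_div_two (x : ZMod 2) :
    (if x = 1 then (1 : ℝ) else 0) = (1 - parityChar x) / 2 := by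
  obtain rfl | rfl := zmod_two_eq_zero_or_eq_one x <;> norm_num [parityChar]

section Characters

variable {ι : Type*} [Fintype ι] [DecidableEq ι]

lemma sum_parityChar_dotProduct_of_ne_zero {a : ι → ZMod 2} (ha : a ≠ 0) :
    ∑ w : ι → ZMod 2, parityChar (w ⬝ᵥ a) = 0 := by
  obtain ⟨i, hi⟩ := Function.ne_iff.mp ha
  have hai : a i = 1 := (zmod_two_eq_zero_or_eq_one (a i)).resolve_left hi
  -- translating by the `i`-th basis vector flips the sign of every term
  have hflip : ∀ w : ι → ZMod 2,
      parityChar ((w + Pi.single i 1) ⬝ᵥ a) = -parityChar (w ⬝ᵥ a) := fun w => by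
    rw [add_dotProduct, single_dotProduct, hai, one_mul, parityChar_add]
    norm_num [parityChar]
  have hsum := Equiv.sum_comp (Equiv.addRight (Pi.single i 1)) fun w => parityChar (w ⬝ᵥ a)
  simp only [Equiv.coe_addRight, hflip, Finset.sum_neg_distrib] at hsum
  linarith

lemma sum_parityChar_dotProduct_zero :
    ∑ w : ι → ZMod 2, parityChar (w ⬝ᵥ 0) = 2 ^ Fintype.card ι := by
  simp [parityChar]

lemma sum_parityChar_dotProduct_add_eq_ite {u v : ι → ZMod 2} :
    ∑ w : ι → ZMod 2, parityChar (w ⬝ᵥ (u + v)) = if u = v then 2 ^ Fintype.card ι else 0 := by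
  split_ifs with huv
  · rw [huv, ZModModule.add_self, sum_parityChar_dotProduct_zero]
  · refine sum_parityChar_dotProduct_of_ne_zero fun h => huv ?_
    rwa [add_eq_zero_iff_eq_neg, ZModModule.neg_eq_self] at h

theorem sum_ite_dotProduct_mul_ite_dotProduct {u v : ι → ZMod 2} (hu : u ≠ 0) (hv : v ≠ 0) :
    ∑ w : ι → ZMod 2, (if w ⬝ᵥ u = 1 then (1 : ℝ) else 0) * (if w ⬝ᵥ v = 1 then 1 else 0) =
      (2 ^ Fintype.card ι + if u = v then 2 ^ Fintype.card ι else 0) / 4 := by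
  have hexpand : ∀ w : ι → ZMod 2,
      (if w ⬝ᵥ u = 1 then (1 : ℝ) else 0) * (if w ⬝ᵥ v = 1 then 1 else 0) =
        (1 - parityChar (w ⬝ᵥ u) - parityChar (w ⬝ᵥ v) + parityChar (w ⬝ᵥ (u + v))) / 4 :=
    fun w => by
      rw [ite_eq_one_eq_one_sub_parityChar_div_two, ite_eq_one_eq_one_sub_parityChar_div_two,
        dotProduct_add, parityChar_add]
      ring
  simp only [hexpand, ← Finset.sum_div, Finset.sum_add_distrib, Finset.sum_sub_distrib,
    sum_parityChar_dotProduct_of_ne_zero hu, sum_parityChar_dotProduct_of_ne_zero hv,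
    sum_parityChar_dotProduct_add_eq_ite, Finset.sum_const, Finset.card_univ, Fintype.card_fun,
    ZMod.card, nsmul_eq_mul]
  push_cast
  ring

end Characters

lemma Bmat_transpose_mul_self_apply (k : ℕ) (u v : {v : Fin k → ZMod 2 // v ≠ 0}) :
    ((Bmat k)ᵀ * Bmat k) u v = ∑ w : Fin k → ZMod 2,
      (if w ⬝ᵥ u.1 = 1 then (1 : ℝ) else 0) * (if w ⬝ᵥ v.1 = 1 then 1 else 0) := by
  rw [Fintype.sum_eq_add_sum_subtype_ne _ 0]
  simp [Matrix.mul_apply, Bmat]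

/-- `BᵀB = 2^{k−2}·𝟙𝟙ᵀ + 2^{k−2}·I`. -/
theorem Bmat_transpose_mul_self (k : ℕ) (hk : 2 ≤ k) :
    (Bmat k)ᵀ * Bmat k =
      (2 : ℝ) ^ (k - 2) • Matrix.of (fun _ _ => (1 : ℝ)) + (2 : ℝ) ^ (k - 2) • 1 := by
  have hpow : (2 : ℝ) ^ k = 2 ^ (k - 2) * 4 := by
    obtain ⟨m, rfl⟩ := Nat.exists_eq_add_of_le hk
    rw [Nat.add_sub_cancel_left, pow_add]; ring
  ext u v
  rw [Bmat_transpose_mul_self_apply, sum_ite_dotProduct_mul_ite_dotProduct u.2 v.2,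
    Fintype.card_fin, hpow]
  simp only [Matrix.add_apply, Matrix.smul_apply, Matrix.of_apply, Matrix.one_apply,
    Subtype.ext_iff, smul_eq_mul]
  split_ifs <;> ring
end

section
/- Fix k ∈ ℕ with k ≥ 2, and let B be the real (2^k − 1) × (2^k − 1) matrix with rows and columns indexed by the nonzero vectors of {0,1}^k, where B_{uv} = ⟨u,v⟩ mod 2 (viewed as a real number). Then for every x ∈ ℝ^{2^k − 1}, ‖Bx‖₂ ≥ 2^{(k−2)/2}·‖x‖₂; in particular, B is invertible and its least singular value satisfies σ_min(B) ≥ 2^{(k−2)/2}. -/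
/-!
Writing the indicator of `⟨u, v⟩ = 1` as `(1 - (-1)^⟨u, v⟩) / 2` and using that the character
sum `∑ v, (-1)^⟨z, v⟩` vanishes unless `z = 0`, one finds `B² = 2^(k-2) (I + J)`, where `J` is
the all-ones matrix. Since `B` is symmetric,
`‖Bx‖² = ⟨x, B² x⟩ = 2^(k-2) ((∑ xᵢ)² + ‖x‖²) ≥ 2^(k-2) ‖x‖²`.
-/

open Finset Matrix

noncomputable def signChar : AddChar (ZMod 2) ℝ := AddChar.zmodChar 2 (neg_one_sq (R := ℝ))

lemma signChar_one : signChar 1 = -1 := by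
  rw [signChar, AddChar.zmodChar_apply]
  exact pow_one _

lemma ite_eq_one_eq_one_sub_signChar_div_two (t : ZMod 2) :
    (if t = 1 then 1 else 0 : ℝ) = (1 - signChar t) / 2 := by
  obtain rfl | rfl : t = 0 ∨ t = 1 := by decide +revert
  · norm_num [AddChar.map_zero_eq_one]
  · norm_num [signChar_one]

section CharacterSum

variable {ι : Type*} [Fintype ι] [DecidableEq ι]

lemma sum_signChar_dotProduct (z : ι → ZMod 2) :
    ∑ v, signChar (z ⬝ᵥ v) = if z = 0 then 2 ^ Fintype.card ι else 0 := by
  let ψ := signChar.compAddMonoidHom (AddMonoidHom.mk' (z ⬝ᵥ ·) (dotProduct_add z))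
  have hψ : ψ = 0 ↔ z = 0 := by
    refine ⟨fun h => ?_, fun h => AddChar.eq_zero_iff.2 fun v => by simp [ψ, h]⟩
    by_contra hz
    obtain ⟨j, hj⟩ := Function.ne_iff.1 hz
    have hj : z j = 1 := (by decide : ∀ t : ZMod 2, t ≠ 0 → t = 1) _ hj
    have := AddChar.eq_zero_iff.1 h (Pi.single j 1)
    norm_num [ψ, hj, signChar_one] at this
  classical
  simpa [ψ, hψ] using AddChar.sum_eq_ite ψ

lemma sum_ite_dotProduct_eq_one_mul {u w : ι → ZMod 2} (hu : u ≠ 0) (hw : w ≠ 0) :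
    ∑ v, (if u ⬝ᵥ v = 1 then 1 else 0 : ℝ) * (if w ⬝ᵥ v = 1 then 1 else 0) =
      2 ^ Fintype.card ι / 4 * (1 + if u = w then 1 else 0) := by
  have hmul (v : ι → ZMod 2) :
      signChar (u ⬝ᵥ v) * signChar (w ⬝ᵥ v) = signChar ((u - w) ⬝ᵥ v) := by
    rw [sub_dotProduct, CharTwo.sub_eq_add, AddChar.map_add_eq_mul]
  have hcard : ∑ _v : ι → ZMod 2, (1 : ℝ) = 2 ^ Fintype.card ι := by
    simp
  simp only [ite_eq_one_eq_one_sub_signChar_div_two]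
  calc _ = ∑ v, (1 - signChar (u ⬝ᵥ v) - signChar (w ⬝ᵥ v) + signChar ((u - w) ⬝ᵥ v)) / 4 :=
        Finset.sum_congr rfl fun v _ => by rw [← hmul]; ring
    _ = _ := by
        simp only [← Finset.sum_div, Finset.sum_add_distrib, Finset.sum_sub_distrib,
          sum_signChar_dotProduct, sub_eq_zero, if_neg hu, if_neg hw, hcard]
        split_ifs <;> ring

end CharacterSum

section SymmSquare

variable {n : Type*} [Fintype n] {A : Matrix n n ℝ} {c : ℝ}

lemma sum_sq_mulVec_of_isSymm (hA : A.IsSymm) (x : n → ℝ) :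
    ∑ i, (A *ᵥ x) i ^ 2 = x ⬝ᵥ (A * A) *ᵥ x := by
  rw [← mulVec_mulVec, dotProduct_mulVec, ← hA.eq, vecMul_transpose, hA.eq]
  simp only [dotProduct, sq]

variable [DecidableEq n]

lemma sum_sq_mulVec_of_mul_self_eq (hA : A.IsSymm) (hAA : A * A = c • (1 + of fun _ _ => 1))
    (x : n → ℝ) : ∑ i, (A *ᵥ x) i ^ 2 = c * ((∑ i, x i) ^ 2 + ∑ i, x i ^ 2) := by
  have hJ : (of fun _ _ => 1 : Matrix n n ℝ) *ᵥ x = fun _ => ∑ i, x i := by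
    ext; simp [mulVec, dotProduct]
  rw [sum_sq_mulVec_of_isSymm hA, hAA, smul_mulVec, add_mulVec, one_mulVec, hJ, dotProduct_smul,
    dotProduct_add, smul_eq_mul]
  simp only [dotProduct, sq, ← Finset.sum_mul]
  ring

lemma mul_sum_sq_le_sum_sq_mulVec_of_mul_self_eq (hA : A.IsSymm) (hc : 0 ≤ c)
    (hAA : A * A = c • (1 + of fun _ _ => 1)) (x : n → ℝ) :
    c * ∑ i, x i ^ 2 ≤ ∑ i, (A *ᵥ x) i ^ 2 := by
  rw [sum_sq_mulVec_of_mul_self_eq hA hAA]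
  nlinarith [sq_nonneg (∑ i, x i)]

lemma isUnit_of_mul_self_eq (hA : A.IsSymm) (hc : 0 < c)
    (hAA : A * A = c • (1 + of fun _ _ => 1)) : IsUnit A := by
  refine mulVec_injective_iff_isUnit.1 <| (injective_iff_map_eq_zero A.mulVecLin).2 fun x hx => ?_
  have hle := mul_sum_sq_le_sum_sq_mulVec_of_mul_self_eq hA hc.le hAA x
  rw [mulVecLin_apply] at hx
  have hsq : ∑ i, x i ^ 2 = 0 :=
    le_antisymm (nonpos_of_mul_nonpos_right (by simpa [hx] using hle) hc) (by positivity)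
  have hsq' := (Fintype.sum_eq_zero_iff_of_nonneg fun i => sq_nonneg (x i)).1 hsq
  funext i
  exact pow_eq_zero_iff two_ne_zero |>.1 (congrFun hsq' i)

end SymmSquare

lemma Bmat_isSymm (k : ℕ) : (Bmat k).IsSymm := by
  ext u v
  simp only [transpose_apply, Bmat, of_apply, dotProduct_comm]

lemma Bmat_mul_self (k : ℕ) :
    Bmat k * Bmat k = (2 ^ k / 4 : ℝ) • (1 + of fun _ _ => 1) := by
  ext u w
  set f : (Fin k → ZMod 2) → ℝ := fun v =>
    (if u.1 ⬝ᵥ v = 1 then 1 else 0) * (if w.1 ⬝ᵥ v = 1 then 1 else 0)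
  calc (Bmat k * Bmat k) u w = ∑ v : {v : Fin k → ZMod 2 // v ≠ 0}, f v := by
        simp only [mul_apply, Bmat, of_apply, f, dotProduct_comm _ w.1]
    _ = ∑ v ∈ univ.erase 0, f v := (sum_subtype _ (by simp) f).symm
    _ = ∑ v, f v := sum_erase _ (by simp [f])
    _ = 2 ^ k / 4 * (1 + if u.1 = w.1 then 1 else 0) := by
        rw [sum_ite_dotProduct_eq_one_mul u.2 w.2, Fintype.card_fin]
    _ = _ := by
        simp [Subtype.ext_iff, one_apply, add_comm]

lemma two_rpow_sub_two_div_two (k : ℕ) : (2 : ℝ) ^ (((k : ℝ) - 2) / 2) = √(2 ^ k / 4) := by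
  have h : (2 : ℝ) ^ k / 4 = 2 ^ ((k : ℝ) - 2) := by
    rw [Real.rpow_sub two_pos, Real.rpow_natCast]
    norm_num
  rw [h, Real.sqrt_eq_rpow, ← Real.rpow_mul zero_le_two]
  ring_nf

theorem Bmat_sMin_general (k : ℕ) :
    (∀ x : {v : Fin k → ZMod 2 // v ≠ 0} → ℝ,
        (2 : ℝ) ^ (((k : ℝ) - 2) / 2) * Real.sqrt (∑ i, x i ^ 2)
          ≤ Real.sqrt (∑ i, ((Bmat k).mulVec x i) ^ 2)) ∧
      IsUnit (Bmat k) := by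
  have hpos : (0 : ℝ) < 2 ^ k / 4 := by positivity
  refine ⟨fun x => ?_, isUnit_of_mul_self_eq (Bmat_isSymm k) hpos (Bmat_mul_self k)⟩
  rw [two_rpow_sub_two_div_two, ← Real.sqrt_mul hpos.le]
  exact Real.sqrt_le_sqrt <|
    mul_sum_sq_le_sum_sq_mulVec_of_mul_self_eq (Bmat_isSymm k) hpos.le (Bmat_mul_self k) x

/-- For every `x`, `‖Bx‖₂ ≥ 2^{(k−2)/2}·‖x‖₂` (Euclidean norms); in particular `B` is
invertible, and its least singular value is at least `2^{(k−2)/2}`. -/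
theorem Bmat_sMin (k : ℕ) (hk : 2 ≤ k) :
    (∀ x : {v : Fin k → ZMod 2 // v ≠ 0} → ℝ,
        (2 : ℝ) ^ (((k : ℝ) - 2) / 2) * Real.sqrt (∑ i, x i ^ 2)
          ≤ Real.sqrt (∑ i, ((Bmat k).mulVec x i) ^ 2)) ∧
      IsUnit (Bmat k) :=
  Bmat_sMin_general k
end

section
/- Fix k ∈ ℕ with k ≥ 1, and let q : 𝔽₂^k → ℝ be any function with q(z) ∈ [1/2 − 2^{−(k+3)}, 1/2 + 2^{−(k+3)}] for all z ∈ 𝔽₂^k. Then there exists a probability distribution μ on 𝔽₂^{k+1} such that for all z ∈ 𝔽₂^k, the probability under F = (F₀, F₁, …, F_k) ∼ μ that F₀ + z₁F₁ + ⋯ + z_kF_k = 1 (sum over 𝔽₂) equals q(z). -/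
open Finset Matrix

namespace BooleanFourier

noncomputable def signChar : AddChar (ZMod 2) ℝ := AddChar.zmodChar 2 (ζ := (-1 : ℝ)) (by norm_num)

@[simp] lemma signChar_one : signChar 1 = -1 := by
  rw [signChar, AddChar.zmodChar_apply, ZMod.val_one, pow_one]

lemma zmod_two_eq_zero_or_one (t : ZMod 2) : t = 0 ∨ t = 1 := by
  revert t; decide

lemma abs_signChar (t : ZMod 2) : |signChar t| = 1 := by
  rcases zmod_two_eq_zero_or_one t with rfl | rfl <;> simp

lemma ite_eq_one_eq_one_sub_signChar_div_two (t : ZMod 2) :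
    (if t = 1 then 1 else 0 : ℝ) = (1 - signChar t) / 2 := by
  rcases zmod_two_eq_zero_or_one t with rfl | rfl <;> norm_num

variable {ι : Type*} [Fintype ι]

noncomputable def walsh (a : ι → ZMod 2) : AddChar (ι → ZMod 2) ℝ :=
  signChar.compAddMonoidHom (AddMonoidHom.mk' (a ⬝ᵥ ·) (dotProduct_add a))

@[simp] lemma walsh_apply (a x : ι → ZMod 2) : walsh a x = signChar (a ⬝ᵥ x) := rfl

lemma walsh_mul_walsh (a b x : ι → ZMod 2) : walsh a x * walsh b x = walsh (a + b) x := by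
  simp [add_dotProduct, AddChar.map_add_eq_mul]

lemma walsh_eq_zero_iff [DecidableEq ι] {a : ι → ZMod 2} : walsh a = 0 ↔ a = 0 := by
  refine ⟨fun h => funext fun j => ?_, fun h => by ext; simp [h]⟩
  have hj := DFunLike.congr_fun h (Pi.single j 1)
  contrapose! hj
  have : a j = 1 := (zmod_two_eq_zero_or_one _).resolve_left hj
  norm_num [this]

variable [DecidableEq ι]

lemma sum_walsh_mul_walsh (a b : ι → ZMod 2) :
    ∑ x, walsh a x * walsh b x = if a = b then (Fintype.card (ι → ZMod 2) : ℝ) else 0 := by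
  have hab : a + b = 0 ↔ a = b := by
    rw [add_eq_zero_iff_eq_neg, show -b = b from funext fun i => ZMod.neg_eq_self_mod_two (b i)]
  simp_rw [walsh_mul_walsh, AddChar.sum_eq_ite, walsh_eq_zero_iff, hab]

lemma sum_walsh_eq_zero {a : ι → ZMod 2} (ha : a ≠ 0) : ∑ x, walsh a x = 0 := by
  simpa [ha] using sum_walsh_mul_walsh a 0

lemma sum_filter_dotProduct_eq_one (p : (ι → ZMod 2) → ℝ) (a : ι → ZMod 2) :
    ∑ x ∈ univ.filter (fun x => a ⬝ᵥ x = 1), p x = (∑ x, p x - ∑ x, p x * walsh a x) / 2 := by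
  rw [sum_filter, ← sum_sub_distrib, sum_div]
  refine sum_congr rfl fun x _ => ?_
  rw [← mul_boole, ite_eq_one_eq_one_sub_signChar_div_two, walsh_apply]
  ring

variable {Z : Type*} [Fintype Z]

noncomputable def walshDist (v : Z → ι → ZMod 2) (c : Z → ℝ) (x : ι → ZMod 2) : ℝ :=
  (1 + ∑ z, c z * walsh (v z) x) / Fintype.card (ι → ZMod 2)

variable {v : Z → ι → ZMod 2} {c : Z → ℝ}

lemma walshDist_nonneg (hc : ∑ z, |c z| ≤ 1) (x : ι → ZMod 2) : 0 ≤ walshDist v c x := by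
  have : -1 ≤ ∑ z, c z * walsh (v z) x :=
    calc -1 ≤ -∑ z, |c z * walsh (v z) x| := by simpa [abs_mul, abs_signChar] using hc
      _ ≤ ∑ z, c z * walsh (v z) x := neg_le_of_abs_le (abs_sum_le_sum_abs _ _)
  exact div_nonneg (by linarith) (by positivity)

lemma sum_walshDist (hv₀ : ∀ z, v z ≠ 0) : ∑ x, walshDist v c x = 1 := by
  have hfourier : ∑ x, ∑ z, c z * walsh (v z) x = 0 := by
    rw [sum_comm]
    exact sum_eq_zero fun z _ => by rw [← mul_sum, sum_walsh_eq_zero (hv₀ z), mul_zero]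
  simp only [walshDist, ← sum_div, sum_add_distrib, hfourier, sum_const, card_univ, nsmul_one,
    add_zero]
  exact div_self (by positivity)

lemma sum_walshDist_mul_walsh (hv : Function.Injective v) (hv₀ : ∀ z, v z ≠ 0) (z : Z) :
    ∑ x, walshDist v c x * walsh (v z) x = c z := by
  have hfourier : ∑ x, (∑ z', c z' * walsh (v z') x) * walsh (v z) x
      = c z * Fintype.card (ι → ZMod 2) := by
    simp_rw [sum_mul, mul_assoc]
    rw [sum_comm]
    simp only [← mul_sum, sum_walsh_mul_walsh, mul_ite, mul_zero]
    rw [sum_eq_single z (fun z' _ hz' => if_neg (hv.ne hz')) (by simp), if_pos rfl]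
  simp only [walshDist, div_mul_eq_mul_div, ← sum_div, add_mul, one_mul, sum_add_distrib,
    sum_walsh_eq_zero (hv₀ z), zero_add, hfourier]
  field_simp

theorem exists_isProbDist_sum_filter_dotProduct_eq_one (hv : Function.Injective v)
    (hv₀ : ∀ z, v z ≠ 0) (q : Z → ℝ) (hq : ∑ z, |1 - 2 * q z| ≤ 1) :
    ∃ μ : (ι → ZMod 2) → ℝ, IsProbDist μ ∧
      ∀ z, ∑ x ∈ univ.filter (fun x => v z ⬝ᵥ x = 1), μ x = q z := by
  refine ⟨walshDist v (fun z => 1 - 2 * q z), ⟨walshDist_nonneg hq, sum_walshDist hv₀⟩,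
    fun z => ?_⟩
  rw [sum_filter_dotProduct_eq_one, sum_walshDist hv₀, sum_walshDist_mul_walsh hv hv₀]
  ring

end BooleanFourier

open BooleanFourier in
theorem exists_linearizing_dist_general (k : ℕ) (q : (Fin k → ZMod 2) → ℝ)
    (hq : ∀ z, q z ∈ Set.Icc (1 / 2 - 1 / 2 ^ (k + 3)) (1 / 2 + 1 / 2 ^ (k + 3) : ℝ)) :
    ∃ μ : (Fin (k + 1) → ZMod 2) → ℝ, IsProbDist μ ∧
      ∀ z : Fin k → ZMod 2,
        ∑ f ∈ Finset.univ.filter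
            (fun f : Fin (k + 1) → ZMod 2 => f 0 + ∑ i : Fin k, z i * f i.succ = 1),
          μ f = q z := by
  have hbias : ∀ z, |1 - 2 * q z| ≤ 1 / 2 ^ k := by
    intro z
    obtain ⟨hlo, hhi⟩ := hq z
    have hscale : (1 : ℝ) / 2 ^ (k + 3) = 1 / 2 ^ k / 8 := by rw [pow_add]; ring
    have hpos : (0 : ℝ) < 1 / 2 ^ k := by positivity
    rw [hscale] at hlo hhi
    rw [abs_le]
    constructor <;> linarith
  have hsum : ∑ z, |1 - 2 * q z| ≤ 1 :=
    calc ∑ z, |1 - 2 * q z| ≤ ∑ _z : Fin k → ZMod 2, 1 / 2 ^ k := sum_le_sum fun z _ => hbias z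
      _ = 1 := by simp
  obtain ⟨μ, hμ, hprob⟩ := exists_isProbDist_sum_filter_dotProduct_eq_one
    (Fin.cons_right_injective 1) (fun z h => one_ne_zero (congrFun h 0)) q hsum
  refine ⟨μ, hμ, fun z => ?_⟩
  rw [← hprob z]
  simp [dotProduct, Fin.sum_univ_succ]

/-- For any `q : 𝔽₂^k → [1/2 − 2^{−(k+3)}, 1/2 + 2^{−(k+3)}]`, there is a probability
distribution `μ` on `𝔽₂^{k+1}` such that for all `z ∈ 𝔽₂^k`, the probability under
`F = (F₀, …, F_k) ∼ μ` that `F₀ + z₁F₁ + ⋯ + z_kF_k = 1` (sum over `𝔽₂`) equals `q(z)`. -/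
theorem exists_linearizing_dist (k : ℕ) (hk : 1 ≤ k) (q : (Fin k → ZMod 2) → ℝ)
    (hq : ∀ z, q z ∈ Set.Icc (1 / 2 - 1 / 2 ^ (k + 3)) (1 / 2 + 1 / 2 ^ (k + 3) : ℝ)) :
    ∃ μ : (Fin (k + 1) → ZMod 2) → ℝ, IsProbDist μ ∧
      ∀ z : Fin k → ZMod 2,
        ∑ f ∈ Finset.univ.filter
            (fun f : Fin (k + 1) → ZMod 2 => f 0 + ∑ i : Fin k, z i * f i.succ = 1),
          μ f = q z :=
  exists_linearizing_dist_general k q hq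
end

section
/- Fix k ∈ ℕ with k ≥ 1, and let B be the real (2^k − 1) × (2^k − 1) matrix with rows and columns indexed by the nonzero vectors of {0,1}^k, where B_{uv} = ⟨u,v⟩ mod 2 (viewed as a real number). Then B is invertible and B^{-1}𝟙 = 2^{1−k}𝟙, where 𝟙 is the all-ones vector of dimension 2^k − 1. -/
open Matrix Finset

theorem ZMod.eq_zero_or_eq_one (x : ZMod 2) : x = 0 ∨ x = 1 := by
  revert x
  decide

section DotProduct

variable {ι : Type*} [Fintype ι] [DecidableEq ι]

theorem two_mul_card_filter_dotProduct_eq_one {u : ι → ZMod 2} (hu : u ≠ 0) :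
    2 * #{w | u ⬝ᵥ w = 1} = 2 ^ Fintype.card ι := by
  obtain ⟨i, hi⟩ := Function.ne_iff.mp hu
  let f : (ι → ZMod 2) →+ ZMod 2 := AddMonoidHom.mk' (u ⬝ᵥ ·) (dotProduct_add u)
  have one_mem_range : (1 : ZMod 2) ∈ Set.range f :=
    ⟨Pi.single i 1, by simpa [f] using (ZMod.eq_zero_or_eq_one (u i)).resolve_left hi⟩
  have fibre_one : #{w | f w = 1} = #{w | f w = 0} :=
    AddMonoidHom.card_fiber_eq_of_mem_range f one_mem_range ⟨0, map_zero f⟩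
  have fibre_not_one : #{w | ¬ f w = 1} = #{w | f w = 0} := by
    congr 1
    ext w
    simpa using ⟨(ZMod.eq_zero_or_eq_one (f w)).resolve_right, fun h => h ▸ zero_ne_one⟩
  have split := card_filter_add_card_filter_not (s := univ) (fun w => f w = 1)
  simp only [card_univ, Fintype.card_fun, ZMod.card] at split
  change 2 * #{w | f w = 1} = _
  omega

theorem sum_ite_dotProduct_eq_one (u : ι → ZMod 2) :
    ∑ w, (if u ⬝ᵥ w = 1 then (1 : ℝ) else 0) = if u = 0 then 0 else 2 ^ Fintype.card ι / 2 := by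
  split_ifs with hu
  · simp [hu]
  · rw [sum_boole, eq_div_iff two_ne_zero, mul_comm]
    exact_mod_cast two_mul_card_filter_dotProduct_eq_one hu

end DotProduct

theorem ite_eq_one_mul_ite_eq_one (a b : ZMod 2) :
    (if a = 1 then (1 : ℝ) else 0) * (if b = 1 then 1 else 0) =
      ((if a = 1 then 1 else 0) + (if b = 1 then 1 else 0) - (if a + b = 1 then 1 else 0)) / 2 := by
  obtain rfl | rfl := ZMod.eq_zero_or_eq_one a <;> obtain rfl | rfl := ZMod.eq_zero_or_eq_one b <;>
    simp [CharTwo.add_self_eq_zero]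

theorem sum_subtype_ne_zero_eq_sum {V M : Type*} [AddCommMonoid M] [Zero V] [Fintype V]
    [DecidableEq V] {f : V → M} (hf : f 0 = 0) : ∑ w : {v : V // v ≠ 0}, f w = ∑ w, f w := by
  rw [Fintype.sum_eq_add_sum_subtype_ne f 0, hf, zero_add]

namespace Bmat

theorem mulVec_const (k : ℕ) (c : ℝ) : Bmat k *ᵥ (fun _ => c) = fun _ => 2 ^ k / 2 * c := by
  ext u
  change ∑ w, Bmat k u w * c = _
  simp only [Bmat, of_apply, ← sum_mul]
  rw [sum_subtype_ne_zero_eq_sum (f := fun w => if u.1 ⬝ᵥ w = 1 then (1 : ℝ) else 0) (by simp),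
    sum_ite_dotProduct_eq_one, if_neg u.2, Fintype.card_fin]

theorem mul_self (k : ℕ) : Bmat k * Bmat k = (2 ^ k / 4 : ℝ) • (1 + of fun _ _ => 1) := by
  ext u v
  simp only [mul_apply, Bmat, of_apply, dotProduct_comm _ v.1]
  rw [sum_subtype_ne_zero_eq_sum (f := fun w =>
    (if u.1 ⬝ᵥ w = 1 then (1 : ℝ) else 0) * (if v.1 ⬝ᵥ w = 1 then 1 else 0)) (by simp)]
  simp only [ite_eq_one_mul_ite_eq_one, ← add_dotProduct, ← sum_div, sum_sub_distrib,
    sum_add_distrib, sum_ite_dotProduct_eq_one, Fintype.card_fin, if_neg u.2, if_neg v.2,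
    add_eq_zero_iff_eq_neg, ZModModule.neg_eq_self, ← Subtype.ext_iff]
  simp only [Matrix.smul_apply, Matrix.add_apply, one_apply, of_apply, smul_eq_mul]
  split_ifs <;> ring

theorem mul_ones (k : ℕ) : Bmat k * (of fun _ _ => 1) = (2 ^ k / 2 : ℝ) • of fun _ _ => 1 := by
  ext u v
  have row_sum := congrFun (mulVec_const k 1) u
  simp only [mulVec, dotProduct, mul_one] at row_sum
  simp only [mul_apply, of_apply, mul_one, Matrix.smul_apply, smul_eq_mul, row_sum]

theorem mul_eq_one (k : ℕ) :
    Bmat k * ((4 / 2 ^ k : ℝ) • Bmat k - (2 / 2 ^ k : ℝ) • of fun _ _ => 1) = 1 := by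
  have hn : (2 : ℝ) ^ k ≠ 0 := by positivity
  rw [Matrix.mul_sub, Matrix.mul_smul, Matrix.mul_smul, mul_self, mul_ones, smul_smul, smul_smul,
    div_mul_div_cancel₀ hn, div_mul_div_cancel₀ hn, div_self four_ne_zero, div_self two_ne_zero,
    one_smul, one_smul, add_sub_cancel_right]

end Bmat

theorem Bmat_inv_mulVec_one_general (k : ℕ) :
    IsUnit (Bmat k) ∧
      (Bmat k)⁻¹.mulVec (fun _ => 1) = fun _ => (2 : ℝ) ^ ((1 : ℤ) - (k : ℤ)) := by
  have hunit : IsUnit (Bmat k) := IsUnit.of_mul_eq_one _ (Bmat.mul_eq_one k)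
  refine ⟨hunit, ?_⟩
  have hB : Bmat k *ᵥ (fun _ => (2 : ℝ) ^ ((1 : ℤ) - (k : ℤ))) = fun _ => 1 := by
    rw [Bmat.mulVec_const, zpow_sub₀ two_ne_zero, zpow_one, zpow_natCast]
    ext
    field_simp
  rw [← hB, mulVec_mulVec, nonsing_inv_mul _ ((isUnit_iff_isUnit_det _).mp hunit), one_mulVec]

/-- `B` is invertible and `B⁻¹𝟙 = 2^{1−k}𝟙`. -/
theorem Bmat_inv_mulVec_one (k : ℕ) (hk : 1 ≤ k) :
    IsUnit (Bmat k) ∧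
      (Bmat k)⁻¹.mulVec (fun _ => 1) = fun _ => (2 : ℝ) ^ ((1 : ℤ) - (k : ℤ)) :=
  Bmat_inv_mulVec_one_general k
end

section
/- Fix n ∈ ℕ and sk ∈ 𝔽₂ⁿ. Let a be uniformly distributed on 𝔽₂ⁿ, let e be an 𝔽₂-valued random variable, and let (α, β) be a random pair taking values in 𝔽₂ × 𝔽₂ⁿ, such that a, e, and (α, β) satisfy: a is independent of (e, α, β). Define y := ⟨a, sk⟩ + e, a' := a + β, and y' := y + α (all operations over 𝔽₂ / 𝔽₂ⁿ). Then a' is uniformly distributed on 𝔽₂ⁿ and is independent of y' − ⟨a', sk⟩; moreover y' − ⟨a', sk⟩ = e + α + ⟨β, sk⟩. In other words, the joint distribution of (a', y' − ⟨a', sk⟩) is the product of the uniform distribution on 𝔽₂ⁿ and the distribution of e + α + ⟨β, sk⟩. -/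
lemma dotProduct_add_add_sub_dotProduct_add {ι R : Type*} [Fintype ι] [CommRing R] [CharP R 2]
    (a β sk : ι → R) (e α : R) :
    (a ⬝ᵥ sk + e + α) - (a + β) ⬝ᵥ sk = e + α + β ⬝ᵥ sk := by
  rw [add_dotProduct, ← CharTwo.sub_eq_add (e + α)]
  ring

lemma pushforward_const_mul_prod_add_shear {G W Z : Type*} [AddGroup G] [Fintype G]
    [DecidableEq G] [Fintype W] [DecidableEq Z] (g : W → G) (h : W → Z) (c : ℝ)
    (ν : W → ℝ) :
    pushforward (fun w : G × W => (w.1 + g w.2, h w.2)) (fun w => c * ν w.2)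
      = fun s => c * pushforward h ν s.2 := by
  funext s
  simp only [pushforward, Finset.sum_filter, Fintype.sum_prod_type, Prod.ext_iff,
    ← eq_sub_iff_add_eq, ite_and, Finset.mul_sum]
  rw [Finset.sum_comm]
  simp only [Finset.sum_ite_eq', Finset.mem_univ, if_true, mul_ite, mul_zero]

theorem affine_noise_resampling_general (n : ℕ) (sk : Fin n → ZMod 2)
    (ν : (ZMod 2 × ZMod 2 × (Fin n → ZMod 2)) → ℝ) :
    (∀ (a : Fin n → ZMod 2) (e α : ZMod 2) (β : Fin n → ZMod 2),
        (dotProduct a sk + e + α) - dotProduct (a + β) sk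
          = e + α + dotProduct β sk) ∧
    pushforward
        (fun w : (Fin n → ZMod 2) × (ZMod 2 × ZMod 2 × (Fin n → ZMod 2)) =>
          (w.1 + w.2.2.2,
            (dotProduct w.1 sk + w.2.1 + w.2.2.1)
              - dotProduct (w.1 + w.2.2.2) sk))
        (fun w => (1 / 2 ^ n) * ν w.2)
      = fun s : (Fin n → ZMod 2) × ZMod 2 =>
          (1 / 2 ^ n) *
            pushforward (fun w : ZMod 2 × ZMod 2 × (Fin n → ZMod 2) =>
              w.1 + w.2.1 + dotProduct w.2.2 sk) ν s.2 := by
  refine ⟨fun a e α β => dotProduct_add_add_sub_dotProduct_add a β sk e α, ?_⟩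
  simp only [dotProduct_add_add_sub_dotProduct_add]
  exact pushforward_const_mul_prod_add_shear (fun w => w.2.2)
    (fun w => w.1 + w.2.1 + w.2.2 ⬝ᵥ sk) _ ν

/-- Adding affine-in-`sk` noise. Let `a` be uniform on `𝔽₂ⁿ`, independent of the triple
`(e, α, β) ∼ ν` (with arbitrary joint law `ν`). Set `y := ⟨a,sk⟩ + e`, `a' := a + β`,
`y' := y + α`. Then `y' − ⟨a',sk⟩ = e + α + ⟨β,sk⟩` identically, and the joint law of
`(a', y' − ⟨a',sk⟩)` is the product of the uniform distribution on `𝔽₂ⁿ` with the law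
of `e + α + ⟨β,sk⟩`. -/
theorem affine_noise_resampling (n : ℕ) (sk : Fin n → ZMod 2)
    (ν : (ZMod 2 × ZMod 2 × (Fin n → ZMod 2)) → ℝ) (hν : IsProbDist ν) :
    (∀ (a : Fin n → ZMod 2) (e α : ZMod 2) (β : Fin n → ZMod 2),
        (dotProduct a sk + e + α) - dotProduct (a + β) sk
          = e + α + dotProduct β sk) ∧
    pushforward
        (fun w : (Fin n → ZMod 2) × (ZMod 2 × ZMod 2 × (Fin n → ZMod 2)) =>
          (w.1 + w.2.2.2,
            (dotProduct w.1 sk + w.2.1 + w.2.2.1)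
              - dotProduct (w.1 + w.2.2.2) sk))
        (fun w => (1 / 2 ^ n) * ν w.2)
      = fun s : (Fin n → ZMod 2) × ZMod 2 =>
          (1 / 2 ^ n) *
            pushforward (fun w : ZMod 2 × ZMod 2 × (Fin n → ZMod 2) =>
              w.1 + w.2.1 + dotProduct w.2.2 sk) ν s.2 :=
  affine_noise_resampling_general n sk ν
end
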